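/- Let M be a symmetric n×n matrix with eigenvalues |λ₁| ≥ … ≥ |λₙ|. Let X = [χ₁,…,χ_k] have orthonormal columns, let qᵢ = χᵢᵀMχᵢ be ordered so |q₁| ≥ … ≥ |q_k|, let H = ∑ᵢ qᵢχᵢχᵢᵀ be the projection of M onto H(X), and set s = ‖M - H‖_F/‖M‖_F and c = ‖H‖_F/‖M‖_F. Then ∑_{i=1}^k λᵢ² ≥ c² ∑_{i=1}^n λᵢ² + ∑_{i=1}^k (|λᵢ| - |qᵢ|)². -/

import Mathlib

open Matrix Finset

/-!
Put `Y = Uᵀ X`, again a matrix with orthonormal columns. Then `qᵢ = ∑ⱼ λⱼ Yⱼᵢ²`, and the matrix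
of squares `(Yⱼᵢ²)` is doubly substochastic: its columns sum to `1`, and its rows sum to at most
`1` because `Y Yᵀ` is an orthogonal projection. Averaging the `|λⱼ|` against such weights can
only lose mass from the top, so the `|qᵢ|` are weakly majorized by the `|λⱼ|`:
`∑_{i<m} |qᵢ| ≤ ∑_{j<m} |λⱼ|` for `m ≤ k`. As the `|qᵢ|` decrease, Abel summation turns this
into `∑ᵢ |qᵢ| (|λᵢ| - |qᵢ|) ≥ 0`. Finally
`λᵢ² = qᵢ² + (|λᵢ| - |qᵢ|)² + 2 |qᵢ| (|λᵢ| - |qᵢ|)` and `c² ∑ λᵢ² ≤ ‖H‖_F² = ∑ qᵢ²`.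
-/

theorem sum_mul_le_sum_of_threshold {ι : Type*} [Fintype ι] (T : Finset ι) (a s : ι → ℝ)
    (τ : ℝ) (haT : ∀ j ∈ T, τ ≤ a j) (haTc : ∀ j ∉ T, a j ≤ τ) (hs0 : ∀ j, 0 ≤ s j)
    (hs1 : ∀ j, s j ≤ 1) (hs : ∑ j, s j = #T) :
    ∑ j, s j * a j ≤ ∑ j ∈ T, a j := by
  classical
  -- The terms below sum to `∑ j ∈ T, a j - ∑ j, s j * a j`, the multiples of `τ` cancelling.
  have hterm : ∀ j, 0 ≤ ((if j ∈ T then 1 else 0) - s j) * (a j - τ) := fun j => by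
    split_ifs with hj
    · exact mul_nonneg (sub_nonneg.2 (hs1 j)) (sub_nonneg.2 (haT j hj))
    · exact mul_nonneg_of_nonpos_of_nonpos (by linarith [hs0 j]) (sub_nonpos.2 (haTc j hj))
  have hT : ∑ j ∈ T, a j = ∑ j, (if j ∈ T then 1 else 0) * a j := by simp [ite_mul]
  have hcard : (#T : ℝ) = ∑ j, (if j ∈ T then (1 : ℝ) else 0) := by simp
  have hsum := sum_nonneg fun j (_ : j ∈ univ) => hterm j
  simp only [sub_mul, mul_sub, sum_sub_distrib, ← sum_mul, ← hT, ← hcard, hs] at hsum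
  linarith

theorem sum_le_sum_of_substochastic {ι κ : Type*} [Fintype ι] [Fintype κ] {S : ι → κ → ℝ}
    (hS : ∀ j i, 0 ≤ S j i) (hrow : ∀ j, ∑ i, S j i ≤ 1) (hcol : ∀ i, ∑ j, S j i = 1)
    {a : ι → ℝ} {b : κ → ℝ} (hb : ∀ i, b i ≤ ∑ j, S j i * a j)
    {I : Finset κ} {T : Finset ι} (hIT : #I = #T) (τ : ℝ)
    (haT : ∀ j ∈ T, τ ≤ a j) (haTc : ∀ j ∉ T, a j ≤ τ) :
    ∑ i ∈ I, b i ≤ ∑ j ∈ T, a j := calc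
  ∑ i ∈ I, b i ≤ ∑ i ∈ I, ∑ j, S j i * a j := sum_le_sum fun i _ => hb i
  _ = ∑ j, (∑ i ∈ I, S j i) * a j := by rw [sum_comm]; simp only [sum_mul]
  _ ≤ ∑ j ∈ T, a j := by
    refine sum_mul_le_sum_of_threshold T a _ τ haT haTc (fun j => sum_nonneg fun i _ => hS j i)
      (fun j => (sum_le_univ_sum_of_nonneg (hS j)).trans (hrow j)) ?_
    rw [sum_comm]
    simp [hcol, hIT]

theorem sum_range_mul_nonneg_of_antitone {w d : ℕ → ℝ} {K : ℕ} (hw : Antitone w)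
    (hw0 : ∀ i, 0 ≤ w i) (hd : ∀ m ≤ K, 0 ≤ ∑ i ∈ range m, d i) :
    0 ≤ ∑ i ∈ range K, w i * d i := by
  simp only [← smul_eq_mul, sum_range_by_parts w d K]
  refine sub_nonneg.2 ((sum_nonpos fun i hi => ?_).trans (smul_nonneg (hw0 _) (hd K le_rfl)))
  have hiK : i + 1 ≤ K := by grind
  exact smul_nonpos_of_nonpos_of_nonneg (sub_nonpos.2 (hw i.le_succ)) (hd _ hiK)

theorem sum_range_dite_eq_sum_filter {k m : ℕ} (hm : m ≤ k) (f : Fin k → ℝ) :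
    ∑ i ∈ range m, (if h : i < k then f ⟨i, h⟩ else 0) =
      ∑ i ∈ {i : Fin k | (i : ℕ) < m}, f i := by
  rw [sum_filter, sum_fin_eq_sum_range, ← sum_range_add_sum_Ico _ hm,
    sum_eq_zero (s := Ico m k) fun i hi => by simp [(mem_Ico.1 hi).1.not_gt], add_zero]
  refine sum_congr rfl fun i hi => ?_
  have him : i < m := mem_range.1 hi
  simp [him, him.trans_le hm]

section Matrix

variable {m n : Type*} [Fintype m] [Fintype n]

theorem sum_sq_eq_trace_mul_transpose (A : Matrix m n ℝ) :
    ∑ r, ∑ c, A r c ^ 2 = trace (A * Aᵀ) := by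
  simp [trace, mul_apply, sq]

theorem sum_sq_mul_diagonal_mul_transpose [DecidableEq n] {X : Matrix m n ℝ} (hX : Xᵀ * X = 1)
    (d : n → ℝ) : ∑ r, ∑ c, (X * diagonal d * Xᵀ) r c ^ 2 = ∑ i, d i ^ 2 := by
  have hsq : X * diagonal d * Xᵀ * (X * diagonal d * Xᵀ)ᵀ = X * diagonal (d ^ 2) * Xᵀ := by
    simp only [transpose_mul, transpose_transpose, diagonal_transpose, Matrix.mul_assoc]
    rw [← Matrix.mul_assoc Xᵀ X, hX, Matrix.one_mul, ← Matrix.mul_assoc (diagonal d),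
      diagonal_mul_diagonal, sq]
    rfl
  rw [sum_sq_eq_trace_mul_transpose, hsq, trace_mul_comm, ← Matrix.mul_assoc, hX, Matrix.one_mul,
    trace_diagonal]
  rfl

omit [Fintype m] in
theorem sum_smul_vecMulVec_col [DecidableEq n] (X : Matrix m n ℝ) (d : n → ℝ) :
    ∑ i, d i • vecMulVec (fun r => X r i) (fun r => X r i) = X * diagonal d * Xᵀ := by
  ext r c
  simp only [Matrix.sum_apply, Matrix.smul_apply, vecMulVec_apply, smul_eq_mul, mul_apply,
    diagonal_apply, mul_ite, mul_zero, sum_ite_eq', mem_univ, ↓reduceIte, transpose_apply]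
  exact sum_congr rfl fun i _ => by ring

theorem dotProduct_diagonal_mulVec [DecidableEq n] (d v : n → ℝ) :
    v ⬝ᵥ (diagonal d *ᵥ v) = ∑ j, d j * v j ^ 2 := by
  simp [dotProduct, mulVec_diagonal, sq, mul_left_comm]

theorem dotProduct_mulVec_conj_diagonal [DecidableEq m] (U : Matrix m m ℝ) (d v : m → ℝ) :
    v ⬝ᵥ ((U * diagonal d * Uᵀ) *ᵥ v) = ∑ j, d j * (Uᵀ *ᵥ v) j ^ 2 := by
  rw [← mulVec_mulVec, ← mulVec_mulVec, dotProduct_mulVec, ← mulVec_transpose,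
    dotProduct_diagonal_mulVec]

theorem diag_le_one_of_isIdempotentElem {P : Matrix n n ℝ} (hPt : Pᵀ = P)
    (hP : IsIdempotentElem P) (j : n) : P j j ≤ 1 := by
  have hsq : P j j ^ 2 ≤ P j j := calc
    P j j ^ 2 ≤ ∑ l, P j l ^ 2 :=
      single_le_sum (f := fun l => P j l ^ 2) (fun _ _ => sq_nonneg _) (mem_univ j)
    _ = P j j := by
      conv_rhs => rw [← hP.eq, mul_apply]
      exact sum_congr rfl fun l _ => by rw [sq, ← transpose_apply P l j, hPt]
  nlinarith

theorem sum_sq_row_le_one [DecidableEq n] {Y : Matrix m n ℝ} (hY : Yᵀ * Y = 1) (j : m) :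
    ∑ i, Y j i ^ 2 ≤ 1 := by
  have hP : IsIdempotentElem (Y * Yᵀ) := by
    rw [IsIdempotentElem, Matrix.mul_assoc, ← Matrix.mul_assoc Yᵀ, hY, Matrix.one_mul]
  simpa [mul_apply, sq] using
    diag_le_one_of_isIdempotentElem (by rw [transpose_mul, transpose_transpose]) hP j

omit [Fintype n] in
theorem sum_sq_col_eq_one [DecidableEq n] {Y : Matrix m n ℝ} (hY : Yᵀ * Y = 1) (i : n) :
    ∑ j, Y j i ^ 2 = 1 := by
  simpa [mul_apply, sq] using congr_fun₂ hY i i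

omit [Fintype n] in
theorem transpose_mul_self_eq_one_of_orthogonal_mul [DecidableEq m] [DecidableEq n] {U : Matrix m m ℝ}
    (hU : Uᵀ * U = 1) {X : Matrix m n ℝ} (hX : Xᵀ * X = 1) : (Uᵀ * X)ᵀ * (Uᵀ * X) = 1 := by
  rw [transpose_mul, transpose_transpose, Matrix.mul_assoc, ← Matrix.mul_assoc U,
    mul_eq_one_comm.1 hU, Matrix.one_mul, hX]

end Matrix

section Spectral

variable {n k : ℕ} {U : Matrix (Fin n) (Fin n) ℝ} {lam : Fin n → ℝ}
  {X : Matrix (Fin n) (Fin k) ℝ} {q : Fin k → ℝ}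

theorem sum_abs_le_sum_abs_eigenvalues (hU : Uᵀ * U = 1)
    (hmono : ∀ i j : Fin n, i ≤ j → |lam j| ≤ |lam i|) (hX : Xᵀ * X = 1)
    (hq : ∀ i, q i = (fun r => X r i) ⬝ᵥ ((U * diagonal lam * Uᵀ) *ᵥ fun r => X r i))
    {m : ℕ} (hmk : m ≤ k) (hmn : m ≤ n) :
    ∑ i ∈ {i : Fin k | (i : ℕ) < m}, |q i| ≤
      ∑ j ∈ {j : Fin n | (j : ℕ) < m}, |lam j| := by
  obtain rfl | hm := m.eq_zero_or_pos
  · simp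
  set Y := Uᵀ * X
  have hY : Yᵀ * Y = 1 := transpose_mul_self_eq_one_of_orthogonal_mul hU hX
  have hqY : ∀ i, |q i| ≤ ∑ j, Y j i ^ 2 * |lam j| := fun i => by
    rw [hq, dotProduct_mulVec_conj_diagonal]
    refine (abs_sum_le_sum_abs _ _).trans_eq (sum_congr rfl fun j _ => ?_)
    rw [abs_mul, abs_sq, mul_comm]
    rfl
  refine sum_le_sum_of_substochastic (fun j i => sq_nonneg (Y j i)) (sum_sq_row_le_one hY)
    (sum_sq_col_eq_one hY) hqY (by simp [Fin.card_filter_val_lt, hmk, hmn])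
    |lam ⟨m - 1, by omega⟩| (fun j hj => hmono _ _ ?_) (fun j hj => hmono _ _ ?_)
  all_goals
    simp only [mem_filter, mem_univ, true_and] at hj
    rw [Fin.le_def]
    dsimp only
    omega

theorem sum_abs_mul_sub_abs_nonneg (hk : k ≤ n) (hU : Uᵀ * U = 1)
    (hmono : ∀ i j : Fin n, i ≤ j → |lam j| ≤ |lam i|) (hX : Xᵀ * X = 1)
    (hq : ∀ i, q i = (fun r => X r i) ⬝ᵥ ((U * diagonal lam * Uᵀ) *ᵥ fun r => X r i))
    (hqmono : ∀ i j : Fin k, i ≤ j → |q j| ≤ |q i|) :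
    0 ≤ ∑ j : Fin k, |q j| * (|lam (Fin.castLE hk j)| - |q j|) := by
  let a : ℕ → ℝ := fun i => if h : i < n then |lam ⟨i, h⟩| else 0
  let b : ℕ → ℝ := fun i => if h : i < k then |q ⟨i, h⟩| else 0
  have hb : Antitone b := fun i j hij => by
    simp only [b]
    split_ifs with hj hi hi
    · exact hqmono ⟨i, hi⟩ ⟨j, hj⟩ hij
    · omega
    · exact abs_nonneg _
    · exact le_rfl
  have hb0 : ∀ i, 0 ≤ b i := fun i => by
    simp only [b]
    split_ifs <;> simp
  have hpartial : ∀ m ≤ k, 0 ≤ ∑ i ∈ range m, (a i - b i) := fun m hm => by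
    rw [sum_sub_distrib, sub_nonneg]
    exact (sum_range_dite_eq_sum_filter hm _).trans_le
      ((sum_abs_le_sum_abs_eigenvalues hU hmono hX hq hm (hm.trans hk)).trans_eq
        (sum_range_dite_eq_sum_filter (hm.trans hk) _).symm)
  have habel := sum_range_mul_nonneg_of_antitone hb hb0 hpartial
  rw [← Fin.sum_univ_eq_sum_range] at habel
  simp only [a, b, Fin.is_lt, hk.trans_lt', dif_pos] at habel
  exact habel

end Spectral

theorem sq_sqrt_div_sqrt_mul_le {A B : ℝ} (hA : 0 ≤ A) (hB : 0 ≤ B) :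
    (√A / √B) ^ 2 * B ≤ A := by
  rw [div_pow, Real.sq_sqrt hA, Real.sq_sqrt hB]
  obtain rfl | hB := hB.eq_or_lt
  · simpa using hA
  · rw [div_mul_cancel₀ _ hB.ne']

theorem sigma_approx_lower_bound_general
    (n k : ℕ) (hk : k ≤ n)
    (U : Matrix (Fin n) (Fin n) ℝ) (hU : Uᵀ * U = 1)
    (lam : Fin n → ℝ)
    (hmono : ∀ i j : Fin n, i ≤ j → |lam j| ≤ |lam i|)
    (M : Matrix (Fin n) (Fin n) ℝ)
    (hM : M = U * Matrix.diagonal lam * Uᵀ)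
    (X : Matrix (Fin n) (Fin k) ℝ) (hX : Xᵀ * X = 1)
    (q : Fin k → ℝ)
    (hq : ∀ i : Fin k, q i = (fun r => X r i) ⬝ᵥ (M *ᵥ fun r => X r i))
    (hqmono : ∀ i j : Fin k, i ≤ j → |q j| ≤ |q i|)
    (H : Matrix (Fin n) (Fin n) ℝ)
    (hH : H = ∑ i : Fin k, q i • vecMulVec (fun r => X r i) (fun r => X r i))
    (c : ℝ)
    (hc : c = Real.sqrt (∑ r, ∑ c', (H r c') ^ 2) / Real.sqrt (∑ r, ∑ c', (M r c') ^ 2)) :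
    ∑ j : Fin k, (lam (Fin.castLE hk j)) ^ 2 ≥
      c ^ 2 * ∑ i, (lam i) ^ 2 +
        ∑ j : Fin k, (|lam (Fin.castLE hk j)| - |q j|) ^ 2 := by
  subst hM hH
  have hc2 : c ^ 2 * ∑ i, lam i ^ 2 ≤ ∑ i, q i ^ 2 := by
    rw [hc, sum_smul_vecMulVec_col, sum_sq_mul_diagonal_mul_transpose hX,
      sum_sq_mul_diagonal_mul_transpose hU]
    exact sq_sqrt_div_sqrt_mul_le (by positivity) (by positivity)
  have hcross := sum_abs_mul_sub_abs_nonneg hk hU hmono hX hq hqmono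
  have hsplit : ∑ j : Fin k, lam (Fin.castLE hk j) ^ 2 = ∑ j, q j ^ 2 +
      ∑ j : Fin k, (|lam (Fin.castLE hk j)| - |q j|) ^ 2 +
      2 * ∑ j : Fin k, |q j| * (|lam (Fin.castLE hk j)| - |q j|) := by
    rw [mul_sum, ← sum_add_distrib, ← sum_add_distrib]
    refine sum_congr rfl fun j _ => ?_
    rw [← sq_abs (lam _), ← sq_abs (q j)]
    ring
  linarith

/-- First claim of Theorem `sigma_approx`:
`∑_{i≤k} λᵢ² ≥ c² ∑ᵢ λᵢ² + ∑_{i≤k} (|λᵢ| - |qᵢ|)²`. -/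
theorem sigma_approx_lower_bound
    (n k : ℕ) (hk : k ≤ n)
    (U : Matrix (Fin n) (Fin n) ℝ) (hU : Uᵀ * U = 1)
    (lam : Fin n → ℝ)
    (hmono : ∀ i j : Fin n, i ≤ j → |lam j| ≤ |lam i|)
    (M : Matrix (Fin n) (Fin n) ℝ)
    (hM : M = U * Matrix.diagonal lam * Uᵀ) (hM0 : M ≠ 0)
    (X : Matrix (Fin n) (Fin k) ℝ) (hX : Xᵀ * X = 1)
    (q : Fin k → ℝ)
    (hq : ∀ i : Fin k, q i = (fun r => X r i) ⬝ᵥ (M *ᵥ fun r => X r i))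
    (hqmono : ∀ i j : Fin k, i ≤ j → |q j| ≤ |q i|)
    (H : Matrix (Fin n) (Fin n) ℝ)
    (hH : H = ∑ i : Fin k, q i • vecMulVec (fun r => X r i) (fun r => X r i))
    (c : ℝ)
    (hc : c = Real.sqrt (∑ r, ∑ c', (H r c') ^ 2) / Real.sqrt (∑ r, ∑ c', (M r c') ^ 2)) :
    ∑ j : Fin k, (lam (Fin.castLE hk j)) ^ 2 ≥
      c ^ 2 * ∑ i, (lam i) ^ 2 +
        ∑ j : Fin k, (|lam (Fin.castLE hk j)| - |q j|) ^ 2 :=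
  sigma_approx_lower_bound_general n k hk U hU lam hmono M hM X hX q hq hqmono H hH c hc
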